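/- arXiv:2402.11004 — 4 statements merged into one kernel-verified Lean document; each statement's English description precedes it below -/
import Mathlib

section
/- The double integral ∫₀¹∫₀¹ (b-1)²(b-a)(a - 1/2)/(a+b-2)³ da db equals (ln 256 - 5)/12. -/
/-!
For fixed `b < 1` the integrand is a rational function of `a` whose only pole `a = 2 - b` lies
beyond `1`; partial fractions in `u = a + b - 2` give the inner integral in closed form,
`(1 - b)² (log (2 - b) - log (1 - b))` plus a rational function. The logarithmic singularity
at `b = 1` is tamed by the factor `(1 - b)²`, and that of the explicit primitive of the inner
integral by `(1 - b)³`, since `x ^ n * log x` is continuous for `n ≥ 1`. The fundamental theorem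
of calculus on `[0, 1]` then gives `-1/2 - (-(2/3) log 2 - 1/12) = (8 log 2 - 5)/12`.
-/

open Real Set intervalIntegral

theorem continuous_pow_mul_log {n : ℕ} (hn : n ≠ 0) : Continuous fun x : ℝ ↦ x ^ n * log x := by
  obtain ⟨m, rfl⟩ := Nat.exists_eq_succ_of_ne_zero hn
  simp_rw [pow_succ, mul_assoc]
  fun_prop

@[fun_prop]
theorem ContinuousOn.pow_mul_log {α : Type*} [TopologicalSpace α] {f : α → ℝ} {s : Set α}
    (hf : ContinuousOn f s) {n : ℕ} (hn : n ≠ 0) :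
    ContinuousOn (fun a ↦ f a ^ n * Real.log (f a)) s :=
  (continuous_pow_mul_log hn).comp_continuousOn hf

/-- Partial fractions: the integrand is
`(b - 1)² (-1/u + (3b - 7/2)/u² + (b - 1)(3 - 2b)/u³)` with `u = a + b - 2`. -/
noncomputable def innerPrimitive (b a : ℝ) : ℝ :=
  (b - 1) ^ 2 * (-log (2 - a - b) - (3 * b - 7 / 2) / (a + b - 2)
    - (b - 1) * (3 - 2 * b) / (2 * (a + b - 2) ^ 2))

theorem hasDerivAt_innerPrimitive {a b : ℝ} (hab : a + b < 2) :
    HasDerivAt (innerPrimitive b)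
      ((b - 1) ^ 2 * (b - a) * (a - 1 / 2) / (a + b - 2) ^ 3) a := by
  have hu : a + b - 2 ≠ 0 := by linarith
  have hv : 2 - a - b ≠ 0 := by linarith
  have hlin : HasDerivAt (fun x ↦ x + b - 2) 1 a := ((hasDerivAt_id a).add_const b).sub_const 2
  have hlog : HasDerivAt (fun x ↦ log (2 - x - b)) (-1 / (2 - a - b)) a := by
    simpa using (((hasDerivAt_id a).const_sub 2).sub_const b).log hv
  have h1 := (hasDerivAt_const a (3 * b - 7 / 2)).div hlin hu
  have h2 := (hasDerivAt_const a ((b - 1) * (3 - 2 * b))).div ((hlin.fun_pow 2).const_mul 2)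
    (mul_ne_zero two_ne_zero (pow_ne_zero 2 hu))
  refine (((hlog.neg.sub h1).sub h2).const_mul ((b - 1) ^ 2)).congr_deriv ?_
  field_simp
  ring

noncomputable def innerIntegral (b : ℝ) : ℝ :=
  (1 - b) ^ 2 * log (2 - b) - (1 - b) ^ 2 * log (1 - b)
    - (1 - b) ^ 2 * (5 - 2 * b) / (2 * (2 - b) ^ 2)

theorem integral_eq_innerIntegral {b : ℝ} (hb : b ≤ 1) :
    ∫ a in (0:ℝ)..1, (b - 1) ^ 2 * (b - a) * (a - 1 / 2) / (a + b - 2) ^ 3 = innerIntegral b := by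
  rcases hb.lt_or_eq with hb | rfl
  · have hpole : ∀ a ∈ uIcc (0:ℝ) 1, a + b < 2 := by
      intro a ha
      rw [uIcc_of_le zero_le_one] at ha
      linarith [ha.2]
    have hint : IntervalIntegrable (fun a ↦ (b - 1) ^ 2 * (b - a) * (a - 1 / 2) / (a + b - 2) ^ 3)
        MeasureTheory.volume 0 1 :=
      ContinuousOn.intervalIntegrable <| ContinuousOn.div (by fun_prop) (by fun_prop)
        fun a ha ↦ pow_ne_zero 3 (by linarith [hpole a ha])
    rw [integral_eq_sub_of_hasDerivAt (fun a ha ↦ hasDerivAt_innerPrimitive (hpole a ha)) hint]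
    have h1 : 1 - b ≠ 0 := by linarith
    have h2 : 2 - b ≠ 0 := by linarith
    simp only [innerPrimitive, innerIntegral, zero_add, sub_zero]
    rw [show (2:ℝ) - 1 - b = 1 - b by ring, show (1:ℝ) + b - 2 = -(1 - b) by ring,
      show b - 2 = -(2 - b) by ring]
    field_simp
    ring
  · simp [innerIntegral]

noncomputable def outerPrimitive (b : ℝ) : ℝ :=
  -((1 - b) ^ 3 + 1) / 3 * log (2 - b) + (1 - b) ^ 3 * log (1 - b) / 3
    + (1 - b) ^ 2 / 3 - (1 - b) / 6 - 1 / (2 * (2 - b))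

theorem hasDerivAt_outerPrimitive {b : ℝ} (hb : b < 1) :
    HasDerivAt outerPrimitive (innerIntegral b) b := by
  have h1 : 1 - b ≠ 0 := by linarith
  have h2 : 2 - b ≠ 0 := by linarith
  have hsub1 : HasDerivAt (fun x ↦ 1 - x) (-1) b := by simpa using (hasDerivAt_id b).const_sub 1
  have hsub2 : HasDerivAt (fun x ↦ 2 - x) (-1) b := by simpa using (hasDerivAt_id b).const_sub 2
  have hA := (((hsub1.fun_pow 3).add_const 1).fun_neg.div_const 3).mul (hsub2.log h2)
  have hB := ((hsub1.fun_pow 3).mul (hsub1.log h1)).div_const 3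
  have hC := (hsub1.fun_pow 2).div_const 3
  have hD := hsub1.div_const 6
  have hE := (hasDerivAt_const b 1).fun_div (hsub2.const_mul 2) (mul_ne_zero two_ne_zero h2)
  refine ((((hA.add hB).add hC).sub hD).sub hE).congr_deriv ?_
  simp only [innerIntegral]
  field_simp
  ring

theorem continuousOn_outerPrimitive : ContinuousOn outerPrimitive (Iio 2) := by
  unfold outerPrimitive
  fun_prop (disch := first | (intro x hx; rw [mem_Iio] at hx; apply ne_of_gt; nlinarith) | norm_num)

theorem continuousOn_innerIntegral : ContinuousOn innerIntegral (Iio 2) := by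
  unfold innerIntegral
  fun_prop (disch := first | (intro x hx; rw [mem_Iio] at hx; apply ne_of_gt; nlinarith) | norm_num)

theorem integral_innerIntegral : ∫ b in (0:ℝ)..1, innerIntegral b = (log 256 - 5) / 12 := by
  have hIcc : Icc (0:ℝ) 1 ⊆ Iio 2 := fun x hx ↦ by simp only [mem_Iio]; linarith [hx.2]
  rw [integral_eq_sub_of_hasDerivAt_of_le zero_le_one (continuousOn_outerPrimitive.mono hIcc)
    (fun b hb ↦ hasDerivAt_outerPrimitive hb.2)
    ((continuousOn_innerIntegral.mono hIcc).intervalIntegrable_of_Icc zero_le_one)]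
  rw [show (256:ℝ) = 2 ^ 8 by norm_num, log_pow]
  norm_num [outerPrimitive]
  ring

theorem stmt_3 :
    ∫ b in (0:ℝ)..1, ∫ a in (0:ℝ)..1,
        (b - 1) ^ 2 * (b - a) * (a - 1 / 2) / (a + b - 2) ^ 3 =
      (Real.log 256 - 5) / 12 := by
  calc _ = ∫ b in (0:ℝ)..1, innerIntegral b :=
        integral_congr fun b hb ↦ integral_eq_innerIntegral (by
          rw [uIcc_of_le zero_le_one] at hb
          exact hb.2)
    _ = _ := integral_innerIntegral
end

section
/- The double integral ∫₀¹∫₀¹ (b-1)(a-1)(b-a)(a - 1/2)/(a+b-2)³ da db equals (7 - 10 ln 2)/6. -/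
open Real intervalIntegral

noncomputable def Fs (s : ℝ) : ℝ :=
  s + (4*s^2 + s/2) * (Real.log s - Real.log (s+1)) + (5*s^2 + 3*s/2)/(s+1)
    - s*(2*s+1)^2/(2*(s+1)^2)

noncomputable def G (b a : ℝ) : ℝ :=
  (1-b) * ((a+b-2) + (4*(1-b)+1/2) * Real.log (2-a-b)
    - (5*(1-b)^2 + 3*(1-b)/2)/(a+b-2) - ((1-b)^3+(1-b)^2/2)/(a+b-2)^2)

lemma G_deriv (b a : ℝ) (ht : a + b - 2 ≠ 0) :
    HasDerivAt (G b) ((b - 1) * (a - 1) * (b - a) * (a - 1 / 2) / (a + b - 2) ^ 3) a := by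
  have ht' : 2 - a - b ≠ 0 := by intro h; apply ht; linarith [h]
  have h1 : HasDerivAt (fun a : ℝ => a + b - 2) 1 a := by
    simpa using ((hasDerivAt_id a).add_const b).sub_const 2
  have h2 : HasDerivAt (fun a : ℝ => 2 - a - b) (-1) a := by
    have : HasDerivAt (fun a : ℝ => 2 - a) (-1) a := by
      simpa using (hasDerivAt_id a).const_sub 2
    simpa using this.sub_const b
  have hlog : HasDerivAt (fun a : ℝ => Real.log (2-a-b)) (-1 / (2-a-b)) a :=
    h2.log ht'
  have hc : HasDerivAt (fun a : ℝ => (5*(1-b)^2 + 3*(1-b)/2)/(a+b-2))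
      ((0 * (a+b-2) - (5*(1-b)^2 + 3*(1-b)/2) * 1) / (a+b-2)^2) a :=
    (hasDerivAt_const a _).div h1 ht
  have hsq : HasDerivAt (fun a : ℝ => (a+b-2)^2) (2*(a+b-2)^1*1) a := h1.pow 2
  have htsq : (a+b-2)^2 ≠ 0 := pow_ne_zero 2 ht
  have hd : HasDerivAt (fun a : ℝ => ((1-b)^3+(1-b)^2/2)/(a+b-2)^2)
      ((0 * (a+b-2)^2 - ((1-b)^3+(1-b)^2/2) * (2*(a+b-2)^1*1)) / ((a+b-2)^2)^2) a :=
    (hasDerivAt_const a _).div hsq htsq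
  have H : HasDerivAt (G b)
      ((1-b) * ((1 + (4*(1-b)+1/2) * (-1 / (2-a-b)))
        - (0 * (a+b-2) - (5*(1-b)^2 + 3*(1-b)/2) * 1) / (a+b-2)^2
        - (0 * (a+b-2)^2 - ((1-b)^3+(1-b)^2/2) * (2*(a+b-2)^1*1)) / ((a+b-2)^2)^2)) a := by
    exact (((h1.add (hlog.const_mul _)).sub hc).sub hd).const_mul _
  convert H using 1
  have h2ab : (2 - a - b) = -(a + b - 2) := by ring
  field_simp
  ring

lemma integrand_contOn (b : ℝ) (hb1 : b < 1) :
    ContinuousOn (fun a : ℝ => (b - 1) * (a - 1) * (b - a) * (a - 1 / 2) / (a + b - 2) ^ 3)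
      (Set.uIcc 0 1) := by
  apply ContinuousOn.div
  · fun_prop
  · fun_prop
  · intro a ha
    rw [Set.uIcc_of_le (by norm_num : (0:ℝ) ≤ 1)] at ha
    have : a + b - 2 ≠ 0 := by
      have := ha.2; intro h; nlinarith
    positivity

lemma innerInt (b : ℝ) (hb0 : 0 ≤ b) (hb1 : b < 1) :
    ∫ a in (0:ℝ)..1, (b - 1) * (a - 1) * (b - a) * (a - 1 / 2) / (a + b - 2) ^ 3
      = Fs (1 - b) := by
  have key : ∀ a ∈ Set.uIcc (0:ℝ) 1, HasDerivAt (G b)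
      ((b - 1) * (a - 1) * (b - a) * (a - 1 / 2) / (a + b - 2) ^ 3) a := by
    intro a ha
    rw [Set.uIcc_of_le (by norm_num : (0:ℝ) ≤ 1)] at ha
    exact G_deriv b a (by have := ha.2; intro h; nlinarith)
  rw [intervalIntegral.integral_eq_sub_of_hasDerivAt key
    ((integrand_contOn b hb1).intervalIntegrable)]
  have hs1 : (1:ℝ) - b ≠ 0 := by linarith
  have hs2 : (2:ℝ) - b ≠ 0 := by linarith
  have e1 : (2:ℝ) - 1 - b = 1 - b := by ring
  have e2 : (2:ℝ) - 0 - b = 2 - b := by ring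
  have e3 : (1:ℝ) - b + 1 = 2 - b := by ring
  simp only [G, Fs, e1, e2, e3]
  have hb2 : (1:ℝ) + b - 2 ≠ 0 := by intro h; apply hs1; linarith
  have hb3 : (0:ℝ) + b - 2 ≠ 0 := by intro h; apply hs2; linarith
  generalize Real.log (1-b) = L1
  generalize Real.log (2-b) = L2
  have h1 : b - 1 ≠ 0 := by intro h; apply hs1; linarith
  have h2 : b - 2 ≠ 0 := by intro h; apply hs2; linarith
  have h3 : (-4:ℝ) + b*2 ≠ 0 := by intro h; apply hs2; linarith
  have h4 : (8:ℝ) - b*8 + b^2*2 ≠ 0 := by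
    intro h; apply hs2; nlinarith [sq_nonneg (2-b)]
  field_simp
  ring

noncomputable def H (s : ℝ) : ℝ :=
  (s*(4*s/3+1/4)) * (s*Real.log s) - (4/3*s^3 + s^2/4 + 1/12) * Real.log (s+1)
    + 4/3*s^2 - 5/12*s - 1/(2*(s+1))

lemma H_contOn : ContinuousOn H (Set.Icc (0:ℝ) 1) := by
  apply ContinuousOn.sub
  apply ContinuousOn.sub
  apply ContinuousOn.add
  apply ContinuousOn.sub
  · exact (Continuous.mul (by fun_prop) Real.continuous_mul_log).continuousOn
  · apply ContinuousOn.mul (by fun_prop)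
    apply ContinuousOn.log (by fun_prop)
    intro x hx; have := hx.1; intro h; linarith
  · fun_prop
  · fun_prop
  · apply ContinuousOn.div (by fun_prop) (by fun_prop)
    intro x hx; have := hx.1; positivity

lemma H_deriv (s : ℝ) (hs : s ∈ Set.Ioo (0:ℝ) 1) : HasDerivAt H (Fs s) s := by
  obtain ⟨hs0, hs1⟩ := hs
  have hsne : s ≠ 0 := ne_of_gt hs0
  have hs1ne : s + 1 ≠ 0 := by linarith
  have hid : HasDerivAt (fun s : ℝ => s) 1 s := hasDerivAt_id s
  have hlog : HasDerivAt Real.log (1/s) s := by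
    simpa using Real.hasDerivAt_log hsne
  have hslog : HasDerivAt (fun s : ℝ => s * Real.log s) (1 * Real.log s + s * (1/s)) s :=
    hid.mul hlog
  have hp : HasDerivAt (fun s : ℝ => s*(4*s/3+1/4)) (1*(4*s/3+1/4) + s*(4/3)) s := by
    apply hid.mul
    have : HasDerivAt (fun s : ℝ => 4*s/3) (4/3) s := by
      have := hid.const_mul (4:ℝ)
      have h2 := this.div_const (3:ℝ)
      simpa using h2
    simpa using this.add_const (1/4:ℝ)
  have h1 : HasDerivAt (fun s : ℝ => (s*(4*s/3+1/4)) * (s*Real.log s))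
      ((1*(4*s/3+1/4) + s*(4/3)) * (s*Real.log s)
        + (s*(4*s/3+1/4)) * (1 * Real.log s + s * (1/s))) s := hp.mul hslog
  have hq : HasDerivAt (fun s : ℝ => 4/3*s^3 + s^2/4 + 1/12)
      (4/3*(3*s^2) + (2*s)/4) s := by
    have h3 : HasDerivAt (fun s : ℝ => s^3) (3*s^2) s := by
      simpa using hasDerivAt_pow 3 s
    have h2 : HasDerivAt (fun s : ℝ => s^2) (2*s) s := by
      simpa using hasDerivAt_pow 2 s
    exact ((h3.const_mul (4/3:ℝ)).add (h2.div_const 4)).add_const _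
  have hlog1 : HasDerivAt (fun s : ℝ => Real.log (s+1)) (1/(s+1)) s := by
    have := (hid.add_const (1:ℝ)).log hs1ne
    simpa using this
  have h2 : HasDerivAt (fun s : ℝ => (4/3*s^3 + s^2/4 + 1/12) * Real.log (s+1))
      ((4/3*(3*s^2) + (2*s)/4) * Real.log (s+1) + (4/3*s^3 + s^2/4 + 1/12) * (1/(s+1))) s :=
    hq.mul hlog1
  have h3a : HasDerivAt (fun s : ℝ => 4/3*s^2) (4/3*(2*s)) s := by
    have h2' : HasDerivAt (fun s : ℝ => s^2) (2*s) s := by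
      simpa using hasDerivAt_pow 2 s
    exact h2'.const_mul (4/3:ℝ)
  have h3b : HasDerivAt (fun s : ℝ => 5/12*s) (5/12) s := by
    simpa using hid.const_mul (5/12:ℝ)
  have hden : (2:ℝ)*(s+1) ≠ 0 := by positivity
  have h4 : HasDerivAt (fun s : ℝ => 1/(2*(s+1)))
      ((0 * (2*(s+1)) - 1 * (2*1)) / (2*(s+1))^2) s := by
    apply (hasDerivAt_const s (1:ℝ)).div _ hden
    exact (hid.add_const 1).const_mul 2
  have Hd : HasDerivAt H
      (((1*(4*s/3+1/4) + s*(4/3)) * (s*Real.log s)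
        + (s*(4*s/3+1/4)) * (1 * Real.log s + s * (1/s)))
       - ((4/3*(3*s^2) + (2*s)/4) * Real.log (s+1) + (4/3*s^3 + s^2/4 + 1/12) * (1/(s+1)))
       + 4/3*(2*s) - 5/12
       - (0 * (2*(s+1)) - 1 * (2*1)) / (2*(s+1))^2) s := by
    unfold H
    exact ((((h1.sub h2).add h3a).sub h3b).sub h4)
  convert Hd using 1
  simp only [Fs]
  field_simp
  ring

lemma Fs_integrable : IntervalIntegrable Fs MeasureTheory.volume 0 1 := by
  have heq : Fs = fun s => s + (4*s + 1/2) * (s * Real.log s)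
      - (4*s^2 + s/2) * Real.log (s+1) + (5*s^2 + 3*s/2)/(s+1)
      - s*(2*s+1)^2/(2*(s+1)^2) := by
    funext s; simp only [Fs]; ring
  rw [heq]
  apply ContinuousOn.intervalIntegrable
  apply ContinuousOn.sub
  apply ContinuousOn.add
  apply ContinuousOn.sub
  · exact (continuous_id.add ((by fun_prop : Continuous fun s:ℝ => 4*s+1/2).mul
      Real.continuous_mul_log)).continuousOn
  · apply ContinuousOn.mul (by fun_prop)
    apply ContinuousOn.log (by fun_prop)
    intro x hx
    rw [Set.uIcc_of_le (by norm_num : (0:ℝ) ≤ 1)] at hx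
    have := hx.1; intro h; linarith
  · apply ContinuousOn.div (by fun_prop) (by fun_prop)
    intro x hx
    rw [Set.uIcc_of_le (by norm_num : (0:ℝ) ≤ 1)] at hx
    have := hx.1; intro h; linarith
  · apply ContinuousOn.div (by fun_prop) (by fun_prop)
    intro x hx
    rw [Set.uIcc_of_le (by norm_num : (0:ℝ) ≤ 1)] at hx
    have := hx.1; positivity

lemma outerInt : ∫ s in (0:ℝ)..1, Fs s = (7 - 10 * Real.log 2) / 6 := by
  rw [intervalIntegral.integral_eq_sub_of_hasDerivAt_of_le (by norm_num) H_contOn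
    (fun s hs => H_deriv s hs) Fs_integrable]
  simp only [H]
  norm_num [Real.log_one]
  ring

theorem stmt_4 :
    ∫ b in (0:ℝ)..1, ∫ a in (0:ℝ)..1,
        (b - 1) * (a - 1) * (b - a) * (a - 1 / 2) / (a + b - 2) ^ 3 =
      (7 - 10 * Real.log 2) / 6 := by
  have hcongr : ∀ b ∈ Set.uIcc (0:ℝ) 1,
      (∫ a in (0:ℝ)..1, (b - 1) * (a - 1) * (b - a) * (a - 1 / 2) / (a + b - 2) ^ 3)
        = Fs (1 - b) := by
    intro b hb
    rw [Set.uIcc_of_le (by norm_num : (0:ℝ) ≤ 1)] at hb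
    rcases lt_or_eq_of_le hb.2 with h1 | h1
    · exact innerInt b hb.1 h1
    · subst h1
      have : ∀ a : ℝ, (1 - 1) * (a - 1) * (1 - a) * (a - 1 / 2) / (a + 1 - 2) ^ 3 = 0 := by
        intro a; norm_num
      simp only [this, intervalIntegral.integral_zero, Fs]
      norm_num
  rw [intervalIntegral.integral_congr hcongr,
    intervalIntegral.integral_comp_sub_left Fs 1]
  norm_num [outerInt]
end

section
/- If a and b are independent uniform random variables on (0,1), then E[((a-1)² + (b-1)²)/(a+b-2)²] = 2 - ln 4, and in particular this expectation is strictly greater than 1/2. -/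
/-!
With `x = 1 - a`, `y = 1 - b` the integrand becomes `(x² + y²) / (x + y)²`, and `x, y` are again
independent and uniform on `(0,1)`. Since `(x² + y²) / (x + y)² = 1 - 2x / (x + y) + 2x² / (x + y)²`,
the inner integral is elementary:
`G x = 3 - 2 / (1 + x) + 2 x log x - 2 x log (1 + x)`, and
`Φ x = 2x + x² log x - (1 + x²) log (1 + x)` is an antiderivative of `G` that is continuous on
`[0,1]`, so the expectation is `Φ 1 - Φ 0 = 2 - 2 log 2`.
-/

open MeasureTheory

/-- The distribution of a uniform random variable on (0,1). -/
noncomputable def unif01 : Measure ℝ := volume.restrict (Set.Ioo (0:ℝ) 1)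

open Real Set

variable {E : Type*} [NormedAddCommGroup E] [NormedSpace ℝ E]

lemma ae_unif01_mem_Ioo : ∀ᵐ x ∂unif01, x ∈ Ioo (0 : ℝ) 1 :=
  ae_restrict_mem measurableSet_Ioo

lemma integral_unif01 (f : ℝ → E) : ∫ x, f x ∂unif01 = ∫ x in (0 : ℝ)..1, f x := by
  rw [unif01, ← integral_Ioc_eq_integral_Ioo, intervalIntegral.integral_of_le zero_le_one]

lemma integral_unif01_comp_one_sub (f : ℝ → E) : ∫ x, f (1 - x) ∂unif01 = ∫ x, f x ∂unif01 := by
  simp only [integral_unif01, intervalIntegral.integral_comp_sub_left, sub_self, sub_zero]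

lemma integral_unif01_integral_unif01_comp_one_sub (f : ℝ → ℝ → E) :
    ∫ a, ∫ b, f (1 - a) (1 - b) ∂unif01 ∂unif01 = ∫ x, ∫ y, f x y ∂unif01 ∂unif01 := by
  simp only [integral_unif01_comp_one_sub (f (1 - _)),
    integral_unif01_comp_one_sub fun x => ∫ y, f x y ∂unif01]

lemma integral_unif01_eq_sub_of_hasDerivAt {f F : ℝ → ℝ} (hF : ContinuousOn F (Icc 0 1))
    (hderiv : ∀ x ∈ Ioo (0 : ℝ) 1, HasDerivAt F (f x) x)
    (hf : IntervalIntegrable f volume 0 1) :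
    ∫ x, f x ∂unif01 = F 1 - F 0 := by
  rw [integral_unif01, intervalIntegral.integral_eq_sub_of_hasDerivAt_of_le zero_le_one hF hderiv hf]

lemma integral_unif01_sq_add_sq_div_sq_add {x : ℝ} (hx : 0 < x) :
    ∫ y, (x ^ 2 + y ^ 2) / (x + y) ^ 2 ∂unif01 =
      3 - 2 / (1 + x) + 2 * (x * log x) - 2 * x * log (1 + x) := by
  have hpos : ∀ y ∈ Icc (0 : ℝ) 1, 0 < x + y := fun y hy => by linarith [hy.1]
  have hderiv : ∀ y ∈ Icc (0 : ℝ) 1,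
      HasDerivAt (fun y => y - 2 * x * log (x + y) - 2 * x ^ 2 * (x + y)⁻¹)
        ((x ^ 2 + y ^ 2) / (x + y) ^ 2) y := by
    intro y hy
    have hxy := (hpos y hy).ne'
    have hsum : HasDerivAt (fun y => x + y) 1 y := (hasDerivAt_id' y).const_add x
    refine (((hasDerivAt_id' y).fun_sub ((hsum.log hxy).const_mul (2 * x))).fun_sub
      ((hsum.fun_inv hxy).const_mul (2 * x ^ 2))).congr_deriv ?_
    field_simp
    ring
  have hcont : ContinuousOn (fun y => (x ^ 2 + y ^ 2) / (x + y) ^ 2) (uIcc 0 1) := by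
    rw [uIcc_of_le zero_le_one]
    exact ContinuousOn.div (by fun_prop) (by fun_prop) fun y hy => (pow_pos (hpos y hy) 2).ne'
  rw [integral_unif01_eq_sub_of_hasDerivAt
    (fun y hy => (hderiv y hy).continuousAt.continuousWithinAt)
    (fun y hy => hderiv y (Ioo_subset_Icc_self hy)) hcont.intervalIntegrable]
  have hx1 : 1 + x ≠ 0 := by positivity
  rw [add_zero, add_comm x 1]
  field_simp
  ring

lemma log_four : log 4 = 2 * log 2 := by
  rw [show (4 : ℝ) = 2 ^ 2 by norm_num, log_pow, Nat.cast_ofNat]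

lemma integral_unif01_integral_unif01_sq_add_sq_div_sq_add :
    ∫ x, ∫ y, (x ^ 2 + y ^ 2) / (x + y) ^ 2 ∂unif01 ∂unif01 = 2 - log 4 := by
  rw [integral_congr_ae (ae_unif01_mem_Ioo.mono fun x hx =>
    integral_unif01_sq_add_sq_div_sq_add hx.1)]
  have hmul_log := continuous_mul_log.continuousOn (s := Icc 0 1)
  have hderiv : ∀ x ∈ Ioo (0 : ℝ) 1,
      HasDerivAt (fun x => 2 * x + x * (x * log x) - (1 + x ^ 2) * log (1 + x))
        (3 - 2 / (1 + x) + 2 * (x * log x) - 2 * x * log (1 + x)) x := by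
    intro x hx
    have hx1 : 1 + x ≠ 0 := by linarith [hx.1]
    refine ((((hasDerivAt_id' x).const_mul 2).fun_add
      ((hasDerivAt_id' x).fun_mul (hasDerivAt_mul_log hx.1.ne'))).fun_sub
      ((((hasDerivAt_id' x).fun_pow 2).const_add 1).fun_mul
        (((hasDerivAt_id' x).const_add 1).log hx1))).congr_deriv ?_
    field_simp
    ring
  have hcont : ContinuousOn (fun x => 3 - 2 / (1 + x) + 2 * (x * log x) - 2 * x * log (1 + x))
      (uIcc 0 1) := by
    rw [uIcc_of_le zero_le_one]
    fun_prop (disch := intro x hx; apply ne_of_gt; linarith [hx.1])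
  rw [integral_unif01_eq_sub_of_hasDerivAt
    (by fun_prop (disch := intro x hx; apply ne_of_gt; linarith [hx.1])) hderiv
    hcont.intervalIntegrable, log_four]
  norm_num

lemma half_lt_two_sub_log_four : (1 / 2 : ℝ) < 2 - log 4 := by
  linarith [log_four, log_two_lt_d9]

theorem stmt_5 :
    (∫ a, ∫ b, ((a - 1) ^ 2 + (b - 1) ^ 2) / (a + b - 2) ^ 2 ∂unif01 ∂unif01) =
        2 - Real.log 4 ∧
      (1 / 2 : ℝ) <
        ∫ a, ∫ b, ((a - 1) ^ 2 + (b - 1) ^ 2) / (a + b - 2) ^ 2 ∂unif01 ∂unif01 := by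
  have hvalue : (∫ a, ∫ b, ((a - 1) ^ 2 + (b - 1) ^ 2) / (a + b - 2) ^ 2 ∂unif01 ∂unif01) =
      2 - log 4 := by
    rw [← integral_unif01_integral_unif01_sq_add_sq_div_sq_add,
      ← integral_unif01_integral_unif01_comp_one_sub fun x y => (x ^ 2 + y ^ 2) / (x + y) ^ 2]
    congr! 4 with a b
    ring
  exact ⟨hvalue, hvalue ▸ half_lt_two_sub_log_four⟩
end

section
/- The double integral ∫₀¹∫₀¹ ((b-1)²(a - 1/2) + (a-1)²(b - 1/2))/(a+b-2)² da db equals (1 - ln 2)/3. -/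
/-!
Substituting `a = 1 - x`, `b = 1 - y` makes the denominator `(x + y) ^ 2`, and with `s = x + y`
the integrand becomes `(1/2 - y) + (y ^ 2 - y) / s + y ^ 2 / s ^ 2`, whose `x`-antiderivative is
elementary. The resulting inner integral only involves `log (1 + y)`, `log y` and `y ^ 2 / (1 + y)`,
and has an explicit antiderivative, continuous at `0` because `y * log y → 0`.
-/

open Real Set intervalIntegral

lemma integral_comp_one_sub {E : Type*} [NormedAddCommGroup E] [NormedSpace ℝ E] (f : ℝ → E) :
    ∫ x in (0 : ℝ)..1, f (1 - x) = ∫ x in (0 : ℝ)..1, f x := by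
  simp [integral_comp_sub_left]

lemma integral_integral_comp_one_sub (G : ℝ → ℝ → ℝ) :
    ∫ b in (0 : ℝ)..1, ∫ a in (0 : ℝ)..1, G a b =
      ∫ y in (0 : ℝ)..1, ∫ x in (0 : ℝ)..1, G (1 - x) (1 - y) := by
  rw [← integral_comp_one_sub fun b => ∫ a in (0 : ℝ)..1, G a b]
  exact integral_congr fun y _ => (integral_comp_one_sub fun a => G a (1 - y)).symm

noncomputable def reflectedIntegrand (x y : ℝ) : ℝ :=
  (y ^ 2 * (1 / 2 - x) + x ^ 2 * (1 / 2 - y)) / (x + y) ^ 2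

noncomputable def sliceIntegral (y : ℝ) : ℝ :=
  1 / 2 + (y ^ 2 - y) * (log (1 + y) - log y) - y ^ 2 / (1 + y)

noncomputable def sliceAntideriv (y : ℝ) : ℝ :=
  (y ^ 3 / 3 - y ^ 2 / 2 - 1 / 6) * log (1 + y) - (y ^ 3 / 3 - y ^ 2 / 2) * log y
    - y ^ 2 / 3 + 2 * y / 3

lemma hasDerivAt_reflectedIntegrand_antideriv {x y : ℝ} (hxy : x + y ≠ 0) :
    HasDerivAt (fun x => (1 / 2 - y) * x + (y ^ 2 - y) * log (x + y) - y ^ 2 / (x + y))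
      (reflectedIntegrand x y) x := by
  have hs : HasDerivAt (fun x => x + y) 1 x := (hasDerivAt_id x).add_const y
  refine ((((hasDerivAt_id x).const_mul (1 / 2 - y)).add ((hs.log hxy).const_mul (y ^ 2 - y))).sub
    ((hasDerivAt_const x (y ^ 2)).div hs hxy)).congr_deriv ?_
  simp only [reflectedIntegrand]
  field_simp
  ring

lemma integral_reflectedIntegrand {y : ℝ} (hy : 0 < y) :
    ∫ x in (0 : ℝ)..1, reflectedIntegrand x y = sliceIntegral y := by
  have hpos : ∀ x ∈ uIcc (0 : ℝ) 1, 0 < x + y := fun x hx => by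
    rw [uIcc_of_le zero_le_one] at hx
    linarith [hx.1]
  have hcont : ContinuousOn (fun x => reflectedIntegrand x y) (uIcc 0 1) :=
    ContinuousOn.div (by fun_prop) (by fun_prop) fun x hx => (pow_pos (hpos x hx) 2).ne'
  rw [integral_eq_sub_of_hasDerivAt
    (fun x hx => hasDerivAt_reflectedIntegrand_antideriv (hpos x hx).ne') hcont.intervalIntegrable]
  simp only [sliceIntegral, zero_add, add_comm 1 y]
  field_simp
  ring

lemma continuousOn_sliceIntegral : ContinuousOn sliceIntegral (Ioi (-1)) := by
  have hml := continuous_mul_log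
  have h : sliceIntegral = fun y => 1 / 2 + (y ^ 2 - y) * log (1 + y) - (y - 1) * (y * log y)
      - y ^ 2 / (1 + y) := by
    ext y
    simp only [sliceIntegral]
    ring
  rw [h]
  fun_prop (disch := intro y hy; rw [mem_Ioi] at hy; linarith)

lemma continuousOn_sliceAntideriv : ContinuousOn sliceAntideriv (Ioi (-1)) := by
  have hml := continuous_mul_log
  have h : sliceAntideriv = fun y => (y ^ 3 / 3 - y ^ 2 / 2 - 1 / 6) * log (1 + y)
      - (y ^ 2 / 3 - y / 2) * (y * log y) - y ^ 2 / 3 + 2 * y / 3 := by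
    ext y
    simp only [sliceAntideriv]
    ring
  rw [h]
  fun_prop (disch := intro y hy; rw [mem_Ioi] at hy; linarith)

lemma hasDerivAt_sliceAntideriv {y : ℝ} (hy : 0 < y) :
    HasDerivAt sliceAntideriv (sliceIntegral y) y := by
  have h1 : 1 + y ≠ 0 := by positivity
  have hlog1 : HasDerivAt (fun y => log (1 + y)) (1 / (1 + y)) y := by
    simpa using ((hasDerivAt_id y).const_add 1).log h1
  have hP : HasDerivAt (fun y : ℝ => y ^ 3 / 3 - y ^ 2 / 2) (y ^ 2 - y) y := by
    refine (((hasDerivAt_pow 3 y).div_const 3).sub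
      ((hasDerivAt_pow 2 y).div_const 2)).congr_deriv ?_
    push_cast
    ring
  have : HasDerivAt sliceAntideriv _ y :=
    ((((hP.sub_const (1 / 6)).mul hlog1).sub (hP.mul (hasDerivAt_log hy.ne'))).sub
      ((hasDerivAt_pow 2 y).div_const 3)).add (((hasDerivAt_id y).const_mul 2).div_const 3)
  refine this.congr_deriv ?_
  simp only [sliceIntegral]
  field_simp
  ring

theorem stmt_6 :
    ∫ b in (0:ℝ)..1, ∫ a in (0:ℝ)..1,
        ((b - 1) ^ 2 * (a - 1 / 2) + (a - 1) ^ 2 * (b - 1 / 2)) / (a + b - 2) ^ 2 =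
      (1 - Real.log 2) / 3 := by
  have hIcc : Icc (0 : ℝ) 1 ⊆ Ioi (-1) := fun y hy => by rw [mem_Ioi]; linarith [hy.1]
  calc _ = ∫ y in (0 : ℝ)..1, ∫ x in (0 : ℝ)..1, reflectedIntegrand x y := by
        rw [integral_integral_comp_one_sub]
        refine integral_congr fun y _ => integral_congr fun x _ => ?_
        simp only [reflectedIntegrand]
        ring
    _ = ∫ y in (0 : ℝ)..1, sliceIntegral y := by
        refine integral_congr_ae (Filter.Eventually.of_forall fun y hy => ?_)
        rw [uIoc_of_le zero_le_one] at hy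
        exact integral_reflectedIntegrand hy.1
    _ = sliceAntideriv 1 - sliceAntideriv 0 := by
        refine integral_eq_sub_of_hasDerivAt_of_le zero_le_one
          (continuousOn_sliceAntideriv.mono hIcc) (fun y hy => hasDerivAt_sliceAntideriv hy.1) ?_
        exact (continuousOn_sliceIntegral.mono (by rwa [uIcc_of_le zero_le_one])).intervalIntegrable
    _ = (1 - Real.log 2) / 3 := by
        norm_num [sliceAntideriv]
        ring
end
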